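/- arXiv:2012.13987 — 4 statements merged into one kernel-verified Lean document; each statement's English description precedes it below -/
import Mathlib

section
/- For h > 0 and z a standard Gaussian random variable, the function ψ(h) = E[log(2·cosh(z·√h + h))] has first derivative ψ'(h) = (1/2)·(1 + E[tanh(z·√h + h)]), which is strictly positive. -/
open MeasureTheory ProbabilityTheory Real Set

/-- The pressure of the one-body system on the Nishimori line:
`ψ(h) = E_z[log(2 cosh(z√h + h))]` with `z ~ N(0,1)`. -/
noncomputable def psiNL (h : ℝ) : ℝ :=
  ∫ z, Real.log (2 * Real.cosh (z * Real.sqrt h + h)) ∂(gaussianReal 0 1)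

/-!
Differentiating under the integral sign gives `ψ'(h) = E[tanh Y · (z / (2√h) + 1)]` with
`Y = z√h + h ~ N(h, h)`. The term `E[z tanh Y]`, which the paper treats by Gaussian integration
by parts and the Nishimori identity, is computed directly: the densities `p₊, p₋` of `N(±m, v)`
satisfy `p₊ - p₋ = tanh (m x / v) (p₊ + p₋)` (`tanh (m x / v)` is the posterior mean of a
uniform `±1` signal seen through Gaussian noise), and since `x tanh (m x / v)` is even this gives
`E_{N(m,v)}[x tanh (m x / v)] = m`. For `m = v = h` this reads
`E[z tanh Y] = √h (1 - E[tanh Y])`, so `ψ'(h) = (1 + E[tanh Y]) / 2`, which is positive because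
`tanh > -1`.
-/

open scoped NNReal

namespace Real

@[fun_prop]
lemma continuous_tanh : Continuous tanh := by
  rw [show tanh = fun x => sinh x / cosh x from funext tanh_eq_sinh_div_cosh]
  exact continuous_sinh.div continuous_cosh fun x => (cosh_pos x).ne'

lemma hasDerivAt_log_two_mul_cosh (x : ℝ) :
    HasDerivAt (fun x => log (2 * cosh x)) (tanh x) x := by
  convert ((hasDerivAt_cosh x).const_mul 2).log (by positivity) using 1
  rw [tanh_eq_sinh_div_cosh]
  field_simp

@[fun_prop]
lemma continuous_log_two_mul_cosh : Continuous fun x => log (2 * cosh x) :=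
  (continuous_const.mul continuous_cosh).log fun x => (mul_pos two_pos (cosh_pos x)).ne'

lemma log_two_mul_cosh_nonneg (x : ℝ) : 0 ≤ log (2 * cosh x) :=
  log_nonneg (by linarith [one_le_cosh x])

lemma log_two_mul_cosh_le (x : ℝ) : log (2 * cosh x) ≤ log 2 + |x| := by
  have hcosh : cosh x ≤ exp |x| := by
    rw [← cosh_abs, cosh_eq]
    linarith [exp_le_exp.2 (neg_le_self (abs_nonneg x))]
  calc log (2 * cosh x) ≤ log (2 * exp |x|) := log_le_log (by positivity) (by linarith)
    _ = log 2 + |x| := by rw [log_mul two_ne_zero (exp_pos _).ne', log_exp]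

end Real

section Integrability

variable {α : Type*} [MeasurableSpace α] {μ : Measure α} {f g : α → ℝ}

lemma integrable_tanh_comp [IsFiniteMeasure μ] (hg : AEMeasurable g μ) :
    Integrable (fun x => tanh (g x)) μ :=
  .of_bound (continuous_tanh.comp_aestronglyMeasurable hg.aestronglyMeasurable) 1
    (.of_forall fun _ => (abs_tanh_lt_one _).le)

lemma MeasureTheory.Integrable.mul_tanh_comp (hf : Integrable f μ) (hg : AEMeasurable g μ) :
    Integrable (fun x => f x * tanh (g x)) μ :=
  hf.mul_bdd (continuous_tanh.comp_aestronglyMeasurable hg.aestronglyMeasurable)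
    (.of_forall fun _ => (abs_tanh_lt_one _).le)

lemma MeasureTheory.Integrable.log_two_mul_cosh_comp [IsFiniteMeasure μ] (hg : Integrable g μ) :
    Integrable (fun x => log (2 * cosh (g x))) μ := by
  refine ((integrable_const (log 2)).add hg.abs).mono'
    (continuous_log_two_mul_cosh.comp_aestronglyMeasurable hg.aestronglyMeasurable)
    (.of_forall fun x => ?_)
  rw [norm_of_nonneg (log_two_mul_cosh_nonneg _)]
  exact log_two_mul_cosh_le _

lemma neg_one_lt_integral_tanh_comp [IsProbabilityMeasure μ] (hg : AEMeasurable g μ) :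
    -1 < ∫ x, tanh (g x) ∂μ := by
  have hint : Integrable (fun x => 1 + tanh (g x)) μ :=
    (integrable_const 1).add (integrable_tanh_comp hg)
  have hpos : 0 < ∫ x, (1 + tanh (g x)) ∂μ := by
    rw [integral_pos_iff_support_of_nonneg
      (fun x => neg_le_iff_add_nonneg'.1 (neg_one_lt_tanh (g x)).le) hint]
    have hsupp : Function.support (fun x => 1 + tanh (g x)) = univ :=
      Function.support_eq_univ fun x => (neg_lt_iff_pos_add'.1 (neg_one_lt_tanh (g x))).ne'
    simp [hsupp]
  rw [integral_add (integrable_const 1) (integrable_tanh_comp hg)] at hpos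
  simp only [integral_const, probReal_univ, smul_eq_mul, mul_one] at hpos
  linarith

end Integrability

section Gaussian

lemma integrable_fun_id_gaussianReal {m : ℝ} {v : ℝ≥0} :
    Integrable (fun x => x) (gaussianReal m v) :=
  (memLp_id_gaussianReal 1).integrable le_rfl

lemma integrable_gaussianReal_iff_integrable_smul {E : Type*} [NormedAddCommGroup E]
    [NormedSpace ℝ E] {m : ℝ} {v : ℝ≥0} {f : ℝ → E} (hv : v ≠ 0) :
    Integrable f (gaussianReal m v) ↔ Integrable (fun x => gaussianPDFReal m v x • f x) := by
  rw [gaussianReal_of_var_ne_zero m hv, integrable_withDensity_iff_integrable_smul'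
    (measurable_gaussianPDF m v) (.of_forall fun _ => gaussianPDF_lt_top)]
  simp only [toReal_gaussianPDF]

lemma hasLaw_mul_sqrt_add_gaussianReal (m : ℝ) (v : ℝ≥0) :
    HasLaw (fun z => z * √v + m) (gaussianReal m v) (gaussianReal 0 1) := by
  convert gaussianReal_add_const
    (gaussianReal_mul_const (HasLaw.id (μ := gaussianReal 0 1)) √v) m using 2
  · rfl
  · simp
  · ext
    simp

lemma gaussianPDFReal_eq_mul_exp (m : ℝ) (v : ℝ≥0) (x : ℝ) :
    gaussianPDFReal m v x
      = gaussianPDFReal 0 v x * exp (-m ^ 2 / (2 * v)) * exp (m * x / v) := by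
  simp only [gaussianPDFReal_def, sub_zero, mul_assoc, ← exp_add]
  congr 2
  ring

lemma gaussianPDFReal_sub_gaussianPDFReal_neg (m : ℝ) (v : ℝ≥0) (x : ℝ) :
    gaussianPDFReal m v x - gaussianPDFReal (-m) v x
      = tanh (m * x / v) * (gaussianPDFReal m v x + gaussianPDFReal (-m) v x) := by
  rw [gaussianPDFReal_eq_mul_exp m, gaussianPDFReal_eq_mul_exp (-m), neg_sq, neg_mul, neg_div,
    tanh_eq]
  field_simp

theorem integral_mul_tanh_gaussianReal (m : ℝ) {v : ℝ≥0} (hv : v ≠ 0) :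
    ∫ x, x * tanh (m * x / v) ∂gaussianReal m v = m := by
  have hint : ∀ μ, Integrable (fun x => x * tanh (m * x / v)) (gaussianReal μ v) := fun _ =>
    Integrable.mul_tanh_comp integrable_fun_id_gaussianReal (by fun_prop)
  have hsymm : ∫ x, x * tanh (m * x / v) ∂gaussianReal (-m) v
      = ∫ x, x * tanh (m * x / v) ∂gaussianReal m v := by
    rw [← gaussianReal_map_neg, integral_map (by fun_prop) (by fun_prop)]
    simp [neg_div, tanh_neg]
  have hsum : (∫ x, x * tanh (m * x / v) ∂gaussianReal m v)
        + ∫ x, x * tanh (m * x / v) ∂gaussianReal (-m) v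
      = (∫ x, x ∂gaussianReal m v) - ∫ x, x ∂gaussianReal (-m) v := by
    simp_rw [integral_gaussianReal_eq_integral_smul hv,
      integrable_gaussianReal_iff_integrable_smul hv] at hint ⊢
    have hid := fun μ => (integrable_gaussianReal_iff_integrable_smul (m := μ) hv).1
      integrable_fun_id_gaussianReal
    rw [← integral_add (hint m) (hint (-m)), ← integral_sub (hid m) (hid (-m))]
    congr 1
    ext x
    simp only [smul_eq_mul]
    linear_combination (-x) * gaussianPDFReal_sub_gaussianPDFReal_neg m v x
  rw [hsymm, integral_id_gaussianReal, integral_id_gaussianReal] at hsum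
  linarith

end Gaussian

theorem integral_mul_tanh_mul_sqrt_add {h : ℝ} (hh : 0 < h) :
    ∫ z, z * tanh (z * √h + h) ∂gaussianReal 0 1
      = √h * (1 - ∫ z, tanh (z * √h + h) ∂gaussianReal 0 1) := by
  set v : ℝ≥0 := ⟨h, hh.le⟩
  have hlaw : HasLaw (fun z => z * √h + h) (gaussianReal h v) (gaussianReal 0 1) :=
    hasLaw_mul_sqrt_add_gaussianReal h v
  have hE : ∫ z, tanh (z * √h + h) ∂gaussianReal 0 1 = ∫ u, tanh u ∂gaussianReal h v :=
    hlaw.integral_comp (f := tanh) continuous_tanh.aestronglyMeasurable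
  have hN : ∫ u, u * tanh u ∂gaussianReal h v = h := by
    have := integral_mul_tanh_gaussianReal h (v := v) (NNReal.coe_ne_zero.1 hh.ne')
    simp_rw [show (v : ℝ) = h from rfl, mul_div_cancel_left₀ _ hh.ne'] at this
    exact this
  have hscaled : √h * ∫ z, z * tanh (z * √h + h) ∂gaussianReal 0 1
      = h * (1 - ∫ z, tanh (z * √h + h) ∂gaussianReal 0 1) :=
    calc √h * ∫ z, z * tanh (z * √h + h) ∂gaussianReal 0 1
        = ∫ z, (z * √h + h - h) * tanh (z * √h + h) ∂gaussianReal 0 1 := by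
          rw [← integral_const_mul]
          congr 1 with z
          ring
      _ = ∫ u, (u - h) * tanh u ∂gaussianReal h v :=
          hlaw.integral_comp (f := fun u => (u - h) * tanh u) (by fun_prop)
      _ = h - h * ∫ u, tanh u ∂gaussianReal h v := by
          simp_rw [sub_mul]
          rw [integral_sub (integrable_fun_id_gaussianReal.mul_tanh_comp aemeasurable_id')
            ((integrable_tanh_comp aemeasurable_id').const_mul h), integral_const_mul, hN]
      _ = h * (1 - ∫ z, tanh (z * √h + h) ∂gaussianReal 0 1) := by rw [hE]; ring
  refine mul_left_cancel₀ (sqrt_pos.2 hh).ne' ?_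
  linear_combination
    hscaled - (1 - ∫ z, tanh (z * √h + h) ∂gaussianReal 0 1) * mul_self_sqrt hh.le

lemma hasDerivAt_log_two_mul_cosh_mul_sqrt_add (z : ℝ) {t : ℝ} (ht : 0 < t) :
    HasDerivAt (fun t => log (2 * cosh (z * √t + t)))
      (tanh (z * √t + t) * (z / (2 * √t) + 1)) t := by
  have hinner : HasDerivAt (fun t => z * √t + t) (z / (2 * √t) + 1) t :=
    (((hasDerivAt_sqrt ht.ne').const_mul z).add (hasDerivAt_id' t)).congr_deriv (by ring)
  exact (hasDerivAt_log_two_mul_cosh _).comp t hinner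

theorem hasDerivAt_psiNL {h : ℝ} (hh : 0 < h) :
    HasDerivAt psiNL (∫ z, tanh (z * √h + h) * (z / (2 * √h) + 1) ∂gaussianReal 0 1) h := by
  have hball : ∀ t ∈ Metric.ball h (h / 2), h / 2 < t := fun t ht => by
    rw [Metric.mem_ball, dist_eq, abs_lt] at ht
    linarith
  have hz : Integrable (fun z : ℝ => z) (gaussianReal 0 1) := integrable_fun_id_gaussianReal
  refine (hasDerivAt_integral_of_dominated_loc_of_deriv_le
    (bound := fun z => |z| / (2 * √(h / 2)) + 1) (Metric.ball_mem_nhds h (half_pos hh))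
    (.of_forall fun t => ?_) ((hz.mul_const √h).add (integrable_const h)).log_two_mul_cosh_comp
    (by fun_prop) (.of_forall fun z t ht => ?_) ((hz.abs.div_const _).add (integrable_const 1))
    (.of_forall fun z t ht => hasDerivAt_log_two_mul_cosh_mul_sqrt_add z
      (by linarith [hball t ht]))).2
  · have hY : Continuous fun z : ℝ => z * √t + t := by fun_prop
    exact (continuous_log_two_mul_cosh.comp hY).aestronglyMeasurable
  · have hsqrt : √(h / 2) ≤ √t := sqrt_le_sqrt (hball t ht).le
    have hsqrt_pos : 0 < √(h / 2) := sqrt_pos.2 (half_pos hh)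
    have ht_pos : 0 < 2 * √t := by linarith
    rw [norm_mul, norm_eq_abs, norm_eq_abs]
    calc |tanh (z * √t + t)| * |z / (2 * √t) + 1| ≤ 1 * (|z| / (2 * √t) + 1) := by
          gcongr
          · exact (abs_tanh_lt_one _).le
          · exact (abs_add_le _ _).trans (by rw [abs_div, abs_of_pos ht_pos, abs_one])
      _ ≤ |z| / (2 * √(h / 2)) + 1 := by rw [one_mul]; gcongr

/-- For `h > 0`, `ψ'(h) = (1/2)(1 + E[tanh(z√h + h)]) > 0`. -/
theorem psiNL_hasDerivAt_and_pos (h : ℝ) (hh : 0 < h) :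
    HasDerivAt psiNL
      ((1 / 2) * (1 + ∫ z, Real.tanh (z * Real.sqrt h + h) ∂(gaussianReal 0 1))) h ∧
    0 < (1 / 2) * (1 + ∫ z, Real.tanh (z * Real.sqrt h + h) ∂(gaussianReal 0 1)) := by
  have hY : AEMeasurable (fun z : ℝ => z * √h + h) (gaussianReal 0 1) := by fun_prop
  have hderiv : ∫ z, tanh (z * √h + h) * (z / (2 * √h) + 1) ∂gaussianReal 0 1
      = 1 / 2 * (1 + ∫ z, tanh (z * √h + h) ∂gaussianReal 0 1) := by
    calc _ = (2 * √h)⁻¹ * (∫ z, z * tanh (z * √h + h) ∂gaussianReal 0 1)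
          + ∫ z, tanh (z * √h + h) ∂gaussianReal 0 1 := by
          rw [← integral_const_mul, ← integral_add
            ((integrable_fun_id_gaussianReal.mul_tanh_comp hY).const_mul _)
            (integrable_tanh_comp hY)]
          congr 1 with z
          ring
      _ = _ := by
          rw [integral_mul_tanh_mul_sqrt_add hh]
          field_simp
          ring
  exact ⟨hderiv ▸ hasDerivAt_psiNL hh, by linarith [neg_one_lt_integral_tanh_comp hY]⟩
end

section
/- For every positive integer n and h > 0, with z a standard Gaussian, E[tanh^{2n−1}(z·√h + h)] = E[tanh^{2n}(z·√h + h)]. -/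
open MeasureTheory ProbabilityTheory Real Set

lemma continuous_tanh' : Continuous Real.tanh := by
  have : Real.tanh = fun x => Real.sinh x / Real.cosh x := by
    funext x; exact Real.tanh_eq_sinh_div_cosh x
  rw [this]
  exact Real.continuous_sinh.div Real.continuous_cosh fun x => (Real.cosh_pos x).ne'

lemma abs_tanh_le_one (x : ℝ) : |Real.tanh x| ≤ 1 := by
  have h1 := Real.cosh_add_sinh x
  have h2 := Real.cosh_sub_sinh x
  have h3 := Real.exp_pos x
  have h4 := Real.exp_pos (-x)
  have hc := Real.cosh_pos x
  rw [Real.tanh_eq_sinh_div_cosh, abs_div, abs_of_pos hc, div_le_one hc, abs_le]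
  constructor <;> linarith

lemma one_add_tanh (x : ℝ) : 1 + Real.tanh x = Real.exp x / Real.cosh x := by
  have hc := (Real.cosh_pos x).ne'
  rw [Real.tanh_eq_sinh_div_cosh, ← Real.cosh_add_sinh x]
  field_simp

lemma one_sub_tanh (x : ℝ) : 1 - Real.tanh x = Real.exp (-x) / Real.cosh x := by
  have hc := (Real.cosh_pos x).ne'
  rw [Real.tanh_eq_sinh_div_cosh, ← Real.cosh_sub_sinh x]
  field_simp

/-- Nishimori identity for the one-body system: for every `n ≥ 1` and `h > 0`,
`E[tanh^(2n-1)(z√h + h)] = E[tanh^(2n)(z√h + h)]` for `z ~ N(0,1)`. -/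
theorem nishimori_identity_one_body (n : ℕ) (hn : 1 ≤ n) (h : ℝ) (hh : 0 < h) :
    (∫ z, Real.tanh (z * Real.sqrt h + h) ^ (2 * n - 1) ∂(gaussianReal 0 1)) =
    ∫ z, Real.tanh (z * Real.sqrt h + h) ^ (2 * n) ∂(gaussianReal 0 1) := by
  set c := Real.sqrt h with hc_def
  have hc : 0 < c := Real.sqrt_pos.mpr hh
  have hc2 : c ^ 2 = h := Real.sq_sqrt hh.le
  -- integrability of bounded powers of tanh
  have hbound : ∀ k : ℕ, Integrable (fun z => Real.tanh (z * c + h) ^ k) (gaussianReal 0 1) := by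
    intro k
    refine Integrable.mono' (integrable_const 1) ?_ (ae_of_all _ fun z => ?_)
    · exact ((continuous_tanh'.comp (by continuity)).pow k).aestronglyMeasurable
    · rw [Real.norm_eq_abs, abs_pow]
      exact pow_le_one₀ (abs_nonneg _) (abs_tanh_le_one _)
  rw [← sub_eq_zero, ← integral_sub (hbound _) (hbound _)]
  -- write the gaussian integral as a Lebesgue integral against the pdf
  have hμ : gaussianReal 0 1
      = volume.withDensity (fun x => ((Real.toNNReal (gaussianPDFReal 0 1 x) : NNReal) : ENNReal)) := by
    rw [gaussianReal_of_var_ne_zero 0 one_ne_zero]; rfl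
  rw [hμ, integral_withDensity_eq_integral_smul ((measurable_gaussianPDFReal 0 1).real_toNNReal)]
  set g : ℝ → ℝ := fun z => gaussianPDFReal 0 1 z *
      (Real.tanh (z * c + h) ^ (2 * n - 1) - Real.tanh (z * c + h) ^ (2 * n)) with hg_def
  have hsmul : (fun z => (Real.toNNReal (gaussianPDFReal 0 1 z)) •
      (Real.tanh (z * c + h) ^ (2 * n - 1) - Real.tanh (z * c + h) ^ (2 * n))) = g := by
    funext z
    simp [hg_def, NNReal.smul_def, Real.coe_toNNReal _ (gaussianPDFReal_nonneg 0 1 z)]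
  rw [hsmul]
  -- key pdf identity
  have hpdf : ∀ z : ℝ, gaussianPDFReal 0 1 (z + 2 * c) * (1 + Real.tanh (z * c + h))
      = gaussianPDFReal 0 1 z * (1 - Real.tanh (z * c + h)) := by
    intro z
    have hcosh := (Real.cosh_pos (z * c + h)).ne'
    simp only [gaussianPDFReal, NNReal.coe_one, mul_one, sub_zero]
    rw [one_add_tanh, one_sub_tanh]
    have hexp : Real.exp (-(z + 2 * c) ^ 2 / 2) * Real.exp (z * c + h)
        = Real.exp (-z ^ 2 / 2) * Real.exp (-(z * c + h)) := by
      rw [← Real.exp_add, ← Real.exp_add]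
      congr 1
      rw [show (z + 2 * c) ^ 2 = z ^ 2 + 4 * z * c + 4 * c ^ 2 from by ring, hc2]
      ring
    ring_nf at hexp ⊢
    linear_combination ((Real.sqrt (Real.pi * 2))⁻¹ * (Real.cosh (z * c + h))⁻¹) * hexp
  -- pointwise antisymmetry
  have key : ∀ z : ℝ, g (-(z + 2 * c)) = - g z := by
    intro z
    have harg : -(z + 2 * c) * c + h = -(z * c + h) := by
      have : -(z + 2 * c) * c = -(z * c) - 2 * c ^ 2 := by ring
      rw [this, hc2]; ring
    have hodd : Odd (2 * n - 1) := by
      refine ⟨n - 1, ?_⟩; omega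
    have heven : Even (2 * n) := even_two_mul n
    set t := Real.tanh (z * c + h) with ht_def
    have hneg : Real.tanh (-(z + 2 * c) * c + h) = -t := by
      rw [harg, Real.tanh_neg]
    have hpdfeven : gaussianPDFReal 0 1 (-(z + 2 * c)) = gaussianPDFReal 0 1 (z + 2 * c) := by
      simp only [gaussianPDFReal, NNReal.coe_one, mul_one, sub_zero]
      congr 2
      ring
    simp only [hg_def, hneg, hodd.neg_pow, heven.neg_pow, hpdfeven]
    rw [← ht_def]
    have h1 : t ^ (2 * n) = t ^ (2 * n - 1) * t := by
      rw [← pow_succ]; congr 1; omega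
    have hp := hpdf z
    rw [← ht_def] at hp
    linear_combination (-(t ^ (2 * n - 1))) * hp
      + (-(gaussianPDFReal 0 1 (z + 2 * c)) - gaussianPDFReal 0 1 z) * h1
  have hflip : ∫ z, g z = ∫ z, - g z := by
    calc ∫ z, g z = ∫ z, g (-z) := (integral_neg_eq_self g volume).symm
      _ = ∫ z, g (-(z + 2 * c)) :=
          (integral_add_right_eq_self (fun z => g (-z)) (2 * c)).symm
      _ = ∫ z, - g z := by simp_rw [key]
  rw [integral_neg] at hflip
  linarith
end

section
/- Let P ≥ 2, x_1,…,x_P ≥ 0 with S = Σ x_p > 0, and b_1,…,b_{P−1} ≥ 0 with B = max_p b_p > 0. Then Σ_{p=1}^{P−1} b_p·x_p·x_{p+1} = B·S²/4 holds if and only if either (a) there exists p* with x_{p*} = x_{p*+1} = S/2 and b_{p*} = B, or (b) there exists p* ∈ {2,…,P−1} with x_{p*} = x_{p*−1} + x_{p*+1} = S/2 and b_{p*−1} = b_{p*} = B. -/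
open Finset

private lemma zero_outside {P : ℕ} {x : ℕ → ℝ} (hx : ∀ p, 0 ≤ x p) {s : Finset ℕ}
    (hs : s ⊆ Finset.range P) (h : ∑ p ∈ Finset.range P, x p = ∑ p ∈ s, x p) :
    ∀ q < P, q ∉ s → x q = 0 := by
  intro q hq hqs
  have hsd := Finset.sum_sdiff (f := x) hs
  have h0 : ∑ p ∈ Finset.range P \ s, x p = 0 := by linarith
  exact (Finset.sum_eq_zero_iff_of_nonneg (fun p _ => hx p)).mp h0 q
    (Finset.mem_sdiff.mpr ⟨Finset.mem_range.mpr hq, hqs⟩)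

private lemma adj_sub {A C : Finset ℕ}
    (hadj : ∀ i ∈ A, ∀ j ∈ C, j = i + 1 ∨ i = j + 1)
    (hA : A.Nontrivial) (hC : C.Nonempty) :
    ∃ c, 1 ≤ c ∧ C = {c} ∧ A = {c - 1, c + 1} := by
  obtain ⟨a, ha, a', ha', hne⟩ := hA
  obtain ⟨c, hc⟩ := hC
  have h1 := hadj a ha c hc
  have h2 := hadj a' ha' c hc
  have hc1 : 1 ≤ c := by omega
  refine ⟨c, hc1, ?_, ?_⟩
  · apply Finset.eq_singleton_iff_unique_mem.mpr
    refine ⟨hc, fun j hj => ?_⟩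
    have h3 := hadj a ha j hj
    have h4 := hadj a' ha' j hj
    omega
  · apply Finset.eq_of_subset_of_card_le
    · intro i hi
      have := hadj i hi c hc
      simp only [Finset.mem_insert, Finset.mem_singleton]
      omega
    · have hcard2 : ({c - 1, c + 1} : Finset ℕ).card ≤ 2 := Finset.card_le_two ..
      have hA2 : 2 ≤ A.card := Finset.one_lt_card.mpr ⟨a, ha, a', ha', hne⟩
      omega

private lemma adj_struct {A C : Finset ℕ} (hA : A.Nonempty) (hC : C.Nonempty)
    (hadj : ∀ i ∈ A, ∀ j ∈ C, j = i + 1 ∨ i = j + 1) :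
    (∃ a c, A = {a} ∧ C = {c} ∧ (c = a + 1 ∨ a = c + 1)) ∨
    (∃ c, 1 ≤ c ∧ C = {c} ∧ A = {c - 1, c + 1}) ∨
    (∃ a, 1 ≤ a ∧ A = {a} ∧ C = {a - 1, a + 1}) := by
  rcases hA.exists_eq_singleton_or_nontrivial with ⟨a, hAa⟩ | hAnt
  · rcases hC.exists_eq_singleton_or_nontrivial with ⟨c, hCc⟩ | hCnt
    · left
      refine ⟨a, c, hAa, hCc, ?_⟩
      exact hadj a (by simp [hAa]) c (by simp [hCc])
    · right; right
      obtain ⟨c', hc1, hA', hC'⟩ := adj_sub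
        (fun j hj i hi => (hadj i hi j hj).symm) hCnt hA
      obtain rfl : a = c' := by
        have : a ∈ ({c'} : Finset ℕ) := hA' ▸ (by simp [hAa])
        simpa using this
      exact ⟨a, hc1, hAa, hC'⟩
  · right; left
    exact adj_sub hadj hAnt hC

private def adjPair (p : ℕ) : ℕ × ℕ := if Even p then (p, p + 1) else (p + 1, p)

/-- Equality case of the chain inequality `Σ b_p x_p x_{p+1} ≤ B S²/4`:
equality holds iff either (a) there are two adjacent sites each carrying mass `S/2`
joined by a maximal weight, or (b) there is a site `p*` (not at the border) with
`x_{p*} = x_{p*-1} + x_{p*+1} = S/2` and both adjacent weights maximal. -/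
theorem chain_inequality_equality_case (P : ℕ) (hP : 2 ≤ P) (x b : ℕ → ℝ)
    (hx : ∀ p, 0 ≤ x p) (hb : ∀ p, 0 ≤ b p)
    (S B : ℝ) (hS : S = ∑ p ∈ Finset.range P, x p)
    (hB : B = (Finset.range (P - 1)).sup'
      ⟨0, Finset.mem_range.mpr (by omega)⟩ b)
    (hSpos : 0 < S) (hBpos : 0 < B) :
    (∑ p ∈ Finset.range (P - 1), b p * x p * x (p + 1) = B * S ^ 2 / 4) ↔
    ((∃ p, p < P - 1 ∧ x p = S / 2 ∧ x (p + 1) = S / 2 ∧ b p = B) ∨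
     (∃ p, 1 ≤ p ∧ p < P - 1 ∧ x p = S / 2 ∧ x (p - 1) + x (p + 1) = S / 2 ∧
        b (p - 1) = B ∧ b p = B)) := by
  constructor
  · intro heq
    -- notation
    set Ev : Finset ℕ := (Finset.range P).filter (fun p => Even p) with hEv
    set Od : Finset ℕ := (Finset.range P).filter (fun p => ¬ Even p) with hOd
    set E : ℝ := ∑ p ∈ Ev, x p with hE'
    set O : ℝ := ∑ p ∈ Od, x p with hO'
    set T : ℝ := ∑ p ∈ Finset.range (P - 1), x p * x (p + 1) with hT'
    have hEOS : E + O = S := by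
      rw [hE', hO', hS]
      exact Finset.sum_filter_add_sum_filter_not _ _ _
    -- injectivity of adjPair
    have hinj : ∀ p ∈ Finset.range (P - 1), ∀ q ∈ Finset.range (P - 1),
        adjPair p = adjPair q → p = q := by
      intro p _ q _ h
      unfold adjPair at h
      split_ifs at h <;> simp [Prod.ext_iff] at h <;> omega
    have hsub : (Finset.range (P - 1)).image adjPair ⊆ Ev ×ˢ Od := by
      intro q hq
      obtain ⟨p, hp, rfl⟩ := Finset.mem_image.mp hq
      simp only [Finset.mem_range] at hp
      unfold adjPair
      rw [hEv, hOd]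
      by_cases he : Even p <;>
        simp only [he, if_true, if_false, Finset.mem_product, Finset.mem_filter,
          Finset.mem_range, Nat.even_add_one] <;>
        refine ⟨⟨?_, ?_⟩, ?_, ?_⟩ <;> first | omega | simp [he]
    have hTim : ∑ q ∈ (Finset.range (P - 1)).image adjPair, x q.1 * x q.2 = T := by
      rw [Finset.sum_image hinj, hT']
      apply Finset.sum_congr rfl
      intro p _
      unfold adjPair
      by_cases he : Even p <;> simp [he] <;> ring
    have hEOprod : E * O = ∑ q ∈ Ev ×ˢ Od, x q.1 * x q.2 := by
      rw [Finset.sum_product, hE', hO', Finset.sum_mul_sum]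
    have hsplit := Finset.sum_sdiff (f := fun q : ℕ × ℕ => x q.1 * x q.2) hsub
    have hsdnn : ∀ q ∈ (Ev ×ˢ Od) \ (Finset.range (P - 1)).image adjPair,
        0 ≤ x q.1 * x q.2 := fun q _ => mul_nonneg (hx _) (hx _)
    have hTle : T ≤ E * O := by
      have := Finset.sum_nonneg hsdnn
      rw [hEOprod, ← hsplit, hTim]
      linarith
    have hEOle : E * O ≤ S ^ 2 / 4 := by nlinarith [sq_nonneg (E - O)]
    have hbB : ∀ p ∈ Finset.range (P - 1), b p ≤ B := by
      intro p hp; rw [hB]; exact Finset.le_sup' b hp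
    have htermnn : ∀ p ∈ Finset.range (P - 1), 0 ≤ (B - b p) * (x p * x (p + 1)) :=
      fun p hp => mul_nonneg (by linarith [hbB p hp]) (mul_nonneg (hx p) (hx _))
    have hdiff : ∑ p ∈ Finset.range (P - 1), (B - b p) * (x p * x (p + 1)) =
        B * T - ∑ p ∈ Finset.range (P - 1), b p * x p * x (p + 1) := by
      rw [hT', Finset.mul_sum, ← Finset.sum_sub_distrib]
      apply Finset.sum_congr rfl; intros; ring
    have hLHSle : ∑ p ∈ Finset.range (P - 1), b p * x p * x (p + 1) ≤ B * T := by
      have := Finset.sum_nonneg htermnn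
      rw [hdiff] at this; linarith
    have hBT1 : B * T ≤ B * (E * O) := mul_le_mul_of_nonneg_left hTle hBpos.le
    have hBT2 : B * (E * O) ≤ B * (S ^ 2 / 4) := mul_le_mul_of_nonneg_left hEOle hBpos.le
    have e1 : B * T = B * (S ^ 2 / 4) := le_antisymm (by linarith) (by linarith [heq])
    have hTval : T = S ^ 2 / 4 := mul_left_cancel₀ hBpos.ne' e1
    have hEOval : E * O = S ^ 2 / 4 := le_antisymm hEOle (hTval ▸ hTle)
    have hLT : ∑ p ∈ Finset.range (P - 1), b p * x p * x (p + 1) = B * T := by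
      rw [e1, heq]; ring
    -- each b-defect term vanishes
    have hterm0 : ∀ p ∈ Finset.range (P - 1), (B - b p) * (x p * x (p + 1)) = 0 := by
      apply (Finset.sum_eq_zero_iff_of_nonneg htermnn).mp
      rw [hdiff, hLT]; ring
    -- each non-adjacent cross term vanishes
    have hsd0 : ∀ q ∈ (Ev ×ˢ Od) \ (Finset.range (P - 1)).image adjPair,
        x q.1 * x q.2 = 0 := by
      apply (Finset.sum_eq_zero_iff_of_nonneg hsdnn).mp
      have : ∑ q ∈ (Ev ×ˢ Od) \ (Finset.range (P - 1)).image adjPair, x q.1 * x q.2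
          = E * O - T := by rw [hEOprod, ← hsplit, hTim]; ring
      rw [this, hEOval, hTval]; ring
    -- E = O = S/2
    have hEO0 : (E - O) ^ 2 = 0 := by nlinarith
    have hEeqO : E = O := by
      have := (pow_eq_zero_iff (two_ne_zero)).mp hEO0
      linarith [sub_eq_zero.mp this]
    have hEh : E = S / 2 := by linarith
    have hOh : O = S / 2 := by linarith
    -- supports
    set A : Finset ℕ := Ev.filter (fun i => x i ≠ 0) with hA'
    set C : Finset ℕ := Od.filter (fun i => x i ≠ 0) with hC'
    have hAsum : ∑ p ∈ A, x p = S / 2 := by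
      rw [hA', Finset.sum_filter_ne_zero, ← hE', hEh]
    have hCsum : ∑ p ∈ C, x p = S / 2 := by
      rw [hC', Finset.sum_filter_ne_zero, ← hO', hOh]
    have hAne : A.Nonempty := Finset.nonempty_of_sum_ne_zero (by rw [hAsum]; positivity)
    have hCne : C.Nonempty := Finset.nonempty_of_sum_ne_zero (by rw [hCsum]; positivity)
    have hAmem : ∀ i ∈ A, i < P ∧ x i ≠ 0 := by
      intro i hi
      simp only [hA', hEv, Finset.mem_filter, Finset.mem_range] at hi
      exact ⟨hi.1.1, hi.2⟩
    have hCmem : ∀ i ∈ C, i < P ∧ x i ≠ 0 := by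
      intro i hi
      simp only [hC', hOd, Finset.mem_filter, Finset.mem_range] at hi
      exact ⟨hi.1.1, hi.2⟩
    have hadj : ∀ i ∈ A, ∀ j ∈ C, j = i + 1 ∨ i = j + 1 := by
      intro i hi j hj
      have hiE : i ∈ Ev := (Finset.mem_filter.mp hi).1
      have hjO : j ∈ Od := (Finset.mem_filter.mp hj).1
      have hxi := (Finset.mem_filter.mp hi).2
      have hxj := (Finset.mem_filter.mp hj).2
      have hmem : (i, j) ∈ (Finset.range (P - 1)).image adjPair := by
        by_contra hni
        exact (mul_ne_zero hxi hxj) (hsd0 (i, j)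
          (Finset.mem_sdiff.mpr ⟨Finset.mem_product.mpr ⟨hiE, hjO⟩, hni⟩))
      obtain ⟨p, _, hpe⟩ := Finset.mem_image.mp hmem
      unfold adjPair at hpe
      split_ifs at hpe <;> simp [Prod.ext_iff] at hpe <;> omega
    -- helper to extract b = B
    have hbEq : ∀ p, p < P - 1 → x p ≠ 0 → x (p + 1) ≠ 0 → b p = B := by
      intro p hp hx1 hx2
      have := hterm0 p (Finset.mem_range.mpr hp)
      rcases mul_eq_zero.mp this with h | h
      · linarith [sub_eq_zero.mp h]
      · exact absurd h (mul_ne_zero hx1 hx2)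
    rcases adj_struct hAne hCne hadj with ⟨a, c, hAa, hCc, hac⟩ | ⟨c, hc1, hCc, hAa⟩ |
      ⟨a, ha1, hAa, hCc⟩
    · -- two singletons : case (a)
      have hxa : x a = S / 2 := by rw [← hAsum, hAa, Finset.sum_singleton]
      have hxc : x c = S / 2 := by rw [← hCsum, hCc, Finset.sum_singleton]
      have haP : a < P := (hAmem a (by simp [hAa])).1
      have hcP : c < P := (hCmem c (by simp [hCc])).1
      have hShalf : S / 2 ≠ 0 := by positivity
      rcases hac with rfl | rfl
      · exact Or.inl ⟨a, by omega, hxa, hxc,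
          hbEq a (by omega) (by rw [hxa]; exact hShalf) (by rw [hxc]; exact hShalf)⟩
      · exact Or.inl ⟨c, by omega, hxc, hxa,
          hbEq c (by omega) (by rw [hxc]; exact hShalf) (by rw [hxa]; exact hShalf)⟩
    · -- C = {c}, A = {c-1, c+1} : case (b) around odd center
      have hxc : x c = S / 2 := by rw [← hCsum, hCc, Finset.sum_singleton]
      have hsumA : x (c - 1) + x (c + 1) = S / 2 := by
        rw [← hAsum, hAa, Finset.sum_pair (by omega : c - 1 ≠ c + 1)]
      have hm1 := hAmem (c - 1) (by simp [hAa])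
      have hp1 := hAmem (c + 1) (by simp [hAa])
      have hShalf : S / 2 ≠ 0 := by positivity
      have hcc : c - 1 + 1 = c := by omega
      refine Or.inr ⟨c, hc1, by omega, hxc, hsumA, ?_, ?_⟩
      · have := hbEq (c - 1) (by omega) hm1.2 (by rw [hcc, hxc]; exact hShalf)
        exact this
      · exact hbEq c (by omega) (by rw [hxc]; exact hShalf) hp1.2
    · -- A = {a}, C = {a-1, a+1} : case (b) around even center
      have hxa : x a = S / 2 := by rw [← hAsum, hAa, Finset.sum_singleton]
      have hsumC : x (a - 1) + x (a + 1) = S / 2 := by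
        rw [← hCsum, hCc, Finset.sum_pair (by omega : a - 1 ≠ a + 1)]
      have hm1 := hCmem (a - 1) (by simp [hCc])
      have hp1 := hCmem (a + 1) (by simp [hCc])
      have hShalf : S / 2 ≠ 0 := by positivity
      have hcc : a - 1 + 1 = a := by omega
      refine Or.inr ⟨a, ha1, by omega, hxa, hsumC, ?_, ?_⟩
      · have := hbEq (a - 1) (by omega) hm1.2 (by rw [hcc, hxa]; exact hShalf)
        exact this
      · exact hbEq a (by omega) (by rw [hxa]; exact hShalf) hp1.2
  · rintro (⟨p, hpP, hxp, hxp1, hbp⟩ | ⟨p, hp1, hpP, hxp, hxsum, hbm, hbp⟩)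
    · -- case (a)
      have hsub : ({p, p + 1} : Finset ℕ) ⊆ Finset.range P := by
        intro q hq
        simp only [Finset.mem_insert, Finset.mem_singleton] at hq
        rcases hq with rfl | rfl <;> simp [Finset.mem_range] <;> omega
      have hz : ∀ q < P, q ∉ ({p, p + 1} : Finset ℕ) → x q = 0 := by
        apply zero_outside hx hsub
        rw [Finset.sum_pair (by omega : p ≠ p + 1), hxp, hxp1, ← hS]; ring
      have : ∑ q ∈ Finset.range (P - 1), b q * x q * x (q + 1)
          = b p * x p * x (p + 1) := by
        apply Finset.sum_eq_single_of_mem p (Finset.mem_range.mpr hpP)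
        intro q hq hne
        simp only [Finset.mem_range] at hq
        rcases lt_or_gt_of_ne hne with h | h
        · have : x q = 0 := hz q (by omega) (by simp; omega)
          rw [this]; ring
        · have : x (q + 1) = 0 := hz (q + 1) (by omega) (by simp; omega)
          rw [this]; ring
      rw [this, hxp, hxp1, hbp]; ring
    · -- case (b)
      have hsub : ({p - 1, p, p + 1} : Finset ℕ) ⊆ Finset.range P := by
        intro q hq
        simp only [Finset.mem_insert, Finset.mem_singleton] at hq
        rcases hq with rfl | rfl | rfl <;> simp [Finset.mem_range] <;> omega
      have hsum3 : ∑ q ∈ ({p - 1, p, p + 1} : Finset ℕ), x q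
          = x (p - 1) + x p + x (p + 1) := by
        rw [Finset.sum_insert (by simp; omega),
          Finset.sum_pair (by omega : p ≠ p + 1)]
        ring
      have hz : ∀ q < P, q ∉ ({p - 1, p, p + 1} : Finset ℕ) → x q = 0 := by
        apply zero_outside hx hsub
        rw [hsum3, ← hS]; linarith
      have hcc : p - 1 + 1 = p := by omega
      have hmain : ∑ q ∈ Finset.range (P - 1), b q * x q * x (q + 1)
          = ∑ q ∈ ({p - 1, p} : Finset ℕ), b q * x q * x (q + 1) := by
        apply (Finset.sum_subset ?_ ?_).symm
        · intro q hq
          simp only [Finset.mem_insert, Finset.mem_singleton] at hq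
          rcases hq with rfl | rfl <;> simp [Finset.mem_range] <;> omega
        · intro q hq hqn
          simp only [Finset.mem_range] at hq
          simp only [Finset.mem_insert, Finset.mem_singleton] at hqn
          push_neg at hqn
          rcases Nat.lt_or_ge q p with h | h
          · have : x q = 0 := hz q (by omega) (by simp; omega)
            rw [this]; ring
          · have : x (q + 1) = 0 := hz (q + 1) (by omega) (by simp; omega)
            rw [this]; ring
      rw [Finset.sum_pair (by omega : p - 1 ≠ p), hcc] at hmain
      rw [hmain, hbm, hbp, hxp]
      calc B * x (p - 1) * (S / 2) + B * (S / 2) * x (p + 1)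
          = B * (S / 2) * (x (p - 1) + x (p + 1)) := by ring
        _ = B * S ^ 2 / 4 := by rw [hxsum]; ring
end

section
/- Let μ be a symmetric K×K tridiagonal matrix with zero diagonal and nonnegative entries μ_{r,r+1}, let α_1,…,α_K ≥ 0 with Σα_r = 1, and set M = (μ_{rs}·α_s). Then the spectral radius of [M²]^(oo) satisfies ρ([M²]^(oo)) ≤ (1/4)·max_{r} μ_{r,r+1}², and the supremum of ρ([M²]^(oo)) over all such (α_1,…,α_K) equals (1/4)·max_r μ_{r,r+1}². -/
open scoped ENNReal

/-- Odd-rows/odd-columns submatrix of a `2n × 2n` matrix (1-based odd indices). -/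
def subOO (n : ℕ) (A : Matrix (Fin (2 * n)) (Fin (2 * n)) ℝ) :
    Matrix (Fin n) (Fin n) ℝ :=
  fun l m => A ⟨2 * l.val, by have := l.isLt; omega⟩ ⟨2 * m.val, by have := m.isLt; omega⟩

/-- The spectral radius (over ℂ) of a real square matrix. -/
noncomputable def specRad (n : ℕ) (A : Matrix (Fin n) (Fin n) ℝ) : ℝ≥0∞ :=
  spectralRadius ℂ (A.map (fun x : ℝ => (x : ℂ)))

/-!
The tridiagonal matrix `μ` only links indices of different parity, so in a nonzero term
`μ i j α j · μ j k α k` of a row sum of `M²` the index `j` has the parity opposite to `i` and `k` the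
parity of `i`. With `μ ≤ B` entrywise, the row sum is therefore at most `B² x y`, where `x + y = 1`
are the total weights of the two parity classes, hence at most `B² / 4`; and the spectral radius is
bounded by the largest row sum, the `ℓ^∞` operator norm. For the supremum, put weight `1/2` on both
ends of an edge carrying `B`, the even end being `2m`: then `[M²]^(oo)` vanishes outside column `m`,
so its diagonal entry `B² / 4` is an eigenvalue.
-/

open Matrix

theorem Matrix.mem_spectrum_of_mulVec_eq_smul {K ι : Type*} [Field K] [Fintype ι] [DecidableEq ι]
    {A : Matrix ι ι K} {v : ι → K} {c : K} (hv : v ≠ 0) (h : A *ᵥ v = c • v) :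
    c ∈ spectrum K A := by
  rw [← spectrum_toLin', ← Module.End.hasEigenvalue_iff_mem_spectrum]
  exact Module.End.hasEigenvalue_of_hasEigenvector
    ⟨Module.End.mem_eigenspace_iff.mpr (by rwa [toLin'_apply]), hv⟩

theorem Matrix.mulVec_col_eq_smul_of_forall_ne {R ι : Type*} [CommSemiring R] [Fintype ι]
    (A : Matrix ι ι R) (j : ι) (h : ∀ i k, k ≠ j → A i k = 0) :
    A *ᵥ (fun i => A i j) = A j j • fun i => A i j := by
  ext i
  rw [mulVec, dotProduct, Finset.sum_eq_single j (fun k _ hk => by rw [h i k hk, zero_mul])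
    (by simp), Pi.smul_apply, smul_eq_mul, mul_comm]

theorem Matrix.nnnorm_apply_le_spectralRadius_of_forall_ne {𝕜 ι : Type*} [NormedField 𝕜]
    [Fintype ι] [DecidableEq ι] (A : Matrix ι ι 𝕜) (j : ι) (h : ∀ i k, k ≠ j → A i k = 0) :
    (‖A j j‖₊ : ℝ≥0∞) ≤ spectralRadius 𝕜 A := by
  rcases eq_or_ne (A j j) 0 with hjj | hjj
  · simp [hjj]
  · have hv : (fun i => A i j) ≠ 0 := fun hv => hjj (congrFun hv j)
    exact le_iSup₂ (f := fun k (_ : k ∈ spectrum 𝕜 A) => (‖k‖₊ : ℝ≥0∞)) (A j j)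
      (mem_spectrum_of_mulVec_eq_smul hv (A.mulVec_col_eq_smul_of_forall_ne j h))

attribute [local instance] Matrix.linftyOpNormedRing Matrix.linftyOpNormedAlgebra in
theorem Matrix.spectralRadius_le_of_forall_sum_norm_le {𝕜 ι : Type*} [RCLike 𝕜] [Fintype ι]
    [DecidableEq ι] [Nonempty ι] (A : Matrix ι ι 𝕜) {c : ℝ} (h : ∀ i, ∑ j, ‖A i j‖ ≤ c) :
    spectralRadius 𝕜 A ≤ ENNReal.ofReal c := by
  refine (spectrum.spectralRadius_le_nnnorm A).trans ?_
  rw [← enorm_eq_nnnorm, ← ofReal_norm, linfty_opNorm_def]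
  refine ENNReal.ofReal_le_ofReal ?_
  obtain ⟨i, -, hi⟩ := Finset.exists_mem_eq_sup Finset.univ Finset.univ_nonempty
    (fun i => ∑ j, ‖A i j‖₊)
  rw [hi, NNReal.coe_sum]
  exact h i

theorem specRad_le_of_forall_sum_le {n : ℕ} [NeZero n] (A : Matrix (Fin n) (Fin n) ℝ) {c : ℝ}
    (hA : ∀ i j, 0 ≤ A i j) (h : ∀ i, ∑ j, A i j ≤ c) : specRad n A ≤ ENNReal.ofReal c :=
  spectralRadius_le_of_forall_sum_norm_le _ fun i => by
    simpa only [map_apply, Complex.norm_real, Real.norm_of_nonneg (hA i _)] using h i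

theorem ofReal_apply_le_specRad_of_forall_ne {n : ℕ} (A : Matrix (Fin n) (Fin n) ℝ) (j : Fin n)
    (h : ∀ i k, k ≠ j → A i k = 0) : ENNReal.ofReal (A j j) ≤ specRad n A := by
  refine le_trans ?_ ((A.map _).nnnorm_apply_le_spectralRadius_of_forall_ne j
    fun i k hk => by simp [h i k hk])
  rw [map_apply, ← enorm_eq_nnnorm, ← ofReal_norm, Complex.norm_real, Real.norm_eq_abs]
  exact ENNReal.ofReal_le_ofReal (le_abs_self _)

theorem Matrix.sum_mul_self_apply_le_of_bipartite {ι : Type*} [Fintype ι] (μ : Matrix ι ι ℝ)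
    (col : ι → Bool) (hbip : ∀ i j, μ i j ≠ 0 → col i ≠ col j) (hμ : ∀ i j, 0 ≤ μ i j)
    {B : ℝ} (hμB : ∀ i j, μ i j ≤ B) {α : ι → ℝ} (hα : ∀ r, 0 ≤ α r) (i : ι) :
    ∑ k, (of (fun i j => μ i j * α j) * of (fun i j => μ i j * α j)) i k
      ≤ B ^ 2 * (∑ r, α r) ^ 2 / 4 := by
  set x : ι → ℝ := fun j => if col j = col i then 0 else α j
  set y : ι → ℝ := fun k => if col k = col i then α k else 0
  have hx : ∀ j, 0 ≤ x j := fun j => by simp only [x]; split_ifs <;> simp [hα]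
  have hy : ∀ k, 0 ≤ y k := fun k => by simp only [y]; split_ifs <;> simp [hα]
  have hxy : ∑ j, x j + ∑ k, y k = ∑ r, α r := by
    rw [← Finset.sum_add_distrib]
    exact Finset.sum_congr rfl fun r _ => by simp only [x, y]; split_ifs <;> simp
  -- a path `i → j → k` of nonzero entries alternates colours, so then `x j = α j` and `y k = α k`
  have hterm : ∀ j k, μ i j * α j * (μ j k * α k) ≤ B ^ 2 * (x j * y k) := by
    intro j k
    by_cases hzero : μ i j = 0 ∨ μ j k = 0
    · rcases hzero with h | h <;> simpa [h] using mul_nonneg (sq_nonneg B) (mul_nonneg (hx j) (hy k))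
    obtain ⟨hij, hjk⟩ := not_or.mp hzero
    have hj : col j ≠ col i := (hbip i j hij).symm
    have hk : col k = col i := by
      have := hbip j k hjk
      revert hj this
      cases col i <;> cases col j <;> cases col k <;> decide
    have hB : 0 ≤ B := (hμ i j).trans (hμB i j)
    simp only [x, y, if_neg hj, if_pos hk]
    calc μ i j * α j * (μ j k * α k) ≤ B * α j * (B * α k) :=
          mul_le_mul (mul_le_mul_of_nonneg_right (hμB i j) (hα j))
            (mul_le_mul_of_nonneg_right (hμB j k) (hα k))
            (mul_nonneg (hμ j k) (hα k)) (mul_nonneg hB (hα j))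
      _ = B ^ 2 * (α j * α k) := by ring
  calc ∑ k, (of (fun i j => μ i j * α j) * of (fun i j => μ i j * α j)) i k
      = ∑ k, ∑ j, μ i j * α j * (μ j k * α k) := by simp only [mul_apply, of_apply]
    _ ≤ ∑ k, ∑ j, B ^ 2 * (x j * y k) := Finset.sum_le_sum fun k _ =>
        Finset.sum_le_sum fun j _ => hterm j k
    _ = B ^ 2 * ((∑ j, x j) * ∑ k, y k) := by
        rw [Finset.sum_mul_sum, Finset.mul_sum, Finset.sum_comm]
        simp_rw [Finset.mul_sum]
    _ ≤ B ^ 2 * (∑ r, α r) ^ 2 / 4 := by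
        rw [← hxy, mul_div_assoc]
        gcongr
        linarith [four_mul_le_sq_add (∑ j, x j) (∑ k, y k)]

theorem Matrix.mul_self_apply_eq_zero_of_weight_eq_zero {ι : Type*} [Fintype ι]
    (μ : Matrix ι ι ℝ) {α : ι → ℝ} {k : ι} (hk : α k = 0) (i : ι) :
    (of (fun i j => μ i j * α j) * of (fun i j => μ i j * α j)) i k = 0 := by
  simp [mul_apply, hk]

theorem Matrix.mul_self_apply_self_of_pair {ι : Type*} [Fintype ι] (μ : Matrix ι ι ℝ)
    {i j : ι} (hij : i ≠ j) (hii : μ i i = 0) (hji : μ j i = μ i j) {α : ι → ℝ}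
    (hαi : α i = 1 / 2) (hαj : α j = 1 / 2) (hα : ∀ k, k ≠ i → k ≠ j → α k = 0) :
    (of (fun i j => μ i j * α j) * of (fun i j => μ i j * α j)) i i = μ i j ^ 2 / 4 := by
  rw [mul_apply, Fintype.sum_eq_add i j hij fun k hk => by simp [hα k hk.1 hk.2]]
  simp only [of_apply, hii, hji, hαi, hαj]
  ring

def evenEmbedding (n : ℕ) : Fin n ↪ Fin (2 * n) where
  toFun m := ⟨2 * m, by omega⟩
  inj' _ _ h := Fin.ext (by simpa using congrArg Fin.val h)

theorem subOO_apply {n : ℕ} (A : Matrix (Fin (2 * n)) (Fin (2 * n)) ℝ) (l m : Fin n) :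
    subOO n A l m = A (evenEmbedding n l) (evenEmbedding n m) :=
  rfl

theorem sum_subOO_le_of_forall_sum_le {n : ℕ} (A : Matrix (Fin (2 * n)) (Fin (2 * n)) ℝ)
    (hA : ∀ i j, 0 ≤ A i j) {c : ℝ} (h : ∀ i, ∑ k, A i k ≤ c) (l : Fin n) :
    ∑ m, subOO n A l m ≤ c := by
  simp_rw [subOO_apply]
  rw [← Finset.sum_map Finset.univ (evenEmbedding n)]
  exact (Finset.sum_le_univ_sum_of_nonneg fun k => hA _ k).trans (h _)

theorem evenEmbedding_ne_of_odd {n : ℕ} (m : Fin n) {j : Fin (2 * n)} (hj : (j : ℕ) % 2 = 1) :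
    evenEmbedding n m ≠ j := fun h => by
  have : 2 * (m : ℕ) = j := congrArg Fin.val h
  omega

theorem exists_evenEmbedding_odd_eq {n : ℕ} {μ : Matrix (Fin (2 * n)) (Fin (2 * n)) ℝ}
    (hsymm : ∀ i j, μ i j = μ j i) (r : ℕ) (hr : r + 1 < 2 * n) :
    ∃ m : Fin n, ∃ j : Fin (2 * n), (j : ℕ) % 2 = 1 ∧
      μ (evenEmbedding n m) j = μ ⟨r, by omega⟩ ⟨r + 1, hr⟩ := by
  rcases Nat.even_or_odd' r with ⟨m, rfl | rfl⟩
  · exact ⟨⟨m, by omega⟩, ⟨2 * m + 1, hr⟩, by simp, rfl⟩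
  · exact ⟨⟨m + 1, by omega⟩, ⟨2 * m + 1, by omega⟩, by simp, hsymm _ _⟩

theorem apply_le_of_tridiagonal {N : ℕ} {μ : Matrix (Fin N) (Fin N) ℝ}
    (hsymm : ∀ i j, μ i j = μ j i)
    (htri : ∀ i j : Fin N, ¬((i : ℕ) + 1 = (j : ℕ) ∨ (j : ℕ) + 1 = (i : ℕ)) → μ i j = 0)
    {B : ℝ} (hB : 0 ≤ B) (hedge : ∀ i j : Fin N, (i : ℕ) + 1 = j → μ i j ≤ B) (i j : Fin N) :
    μ i j ≤ B := by
  by_cases h : (i : ℕ) + 1 = j ∨ (j : ℕ) + 1 = i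
  · rcases h with h | h
    · exact hedge i j h
    · exact hsymm i j ▸ hedge j i h
  · exact htri i j h ▸ hB

theorem specRad_subOO_mul_self_le {n : ℕ} [NeZero n] {μ : Matrix (Fin (2 * n)) (Fin (2 * n)) ℝ}
    (htri : ∀ i j : Fin (2 * n),
      ¬((i : ℕ) + 1 = (j : ℕ) ∨ (j : ℕ) + 1 = (i : ℕ)) → μ i j = 0)
    (hμ : ∀ i j, 0 ≤ μ i j) {B : ℝ} (hμB : ∀ i j, μ i j ≤ B) {α : Fin (2 * n) → ℝ}
    (hα : ∀ r, 0 ≤ α r) (hα1 : ∑ r, α r = 1) :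
    specRad n (subOO n ((of fun i j => μ i j * α j) * (of fun i j => μ i j * α j)))
      ≤ ENNReal.ofReal (B ^ 2 / 4) := by
  have hbip : ∀ i j, μ i j ≠ 0 → decide ((i : ℕ) % 2 = 0) ≠ decide ((j : ℕ) % 2 = 0) :=
    fun i j h => by
      have := not_not.mp (mt (htri i j) h)
      simp only [ne_eq, decide_eq_decide]
      omega
  have hrow := μ.sum_mul_self_apply_le_of_bipartite _ hbip hμ hμB hα
  simp only [hα1, one_pow, mul_one] at hrow
  have hnonneg : ∀ i k, 0 ≤ ((of fun i j => μ i j * α j) * (of fun i j => μ i j * α j)) i k :=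
    fun i k => by
      rw [mul_apply]
      exact Finset.sum_nonneg fun j _ =>
        mul_nonneg (mul_nonneg (hμ _ _) (hα _)) (mul_nonneg (hμ _ _) (hα _))
  exact specRad_le_of_forall_sum_le _ (fun _ _ => hnonneg _ _)
    (sum_subOO_le_of_forall_sum_le _ hnonneg hrow)

theorem ofReal_le_specRad_subOO_mul_self {n : ℕ} {μ : Matrix (Fin (2 * n)) (Fin (2 * n)) ℝ}
    (hsymm : ∀ i j, μ i j = μ j i)
    (htri : ∀ i j : Fin (2 * n),
      ¬((i : ℕ) + 1 = (j : ℕ) ∨ (j : ℕ) + 1 = (i : ℕ)) → μ i j = 0)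
    (m : Fin n) {j : Fin (2 * n)} (hj : (j : ℕ) % 2 = 1) {α : Fin (2 * n) → ℝ}
    (hαm : α (evenEmbedding n m) = 1 / 2) (hαj : α j = 1 / 2)
    (hα : ∀ k, k ≠ evenEmbedding n m → k ≠ j → α k = 0) :
    ENNReal.ofReal (μ (evenEmbedding n m) j ^ 2 / 4)
      ≤ specRad n (subOO n ((of fun i j => μ i j * α j) * (of fun i j => μ i j * α j))) := by
  have hcol : ∀ l m', m' ≠ m →
      subOO n ((of fun i j => μ i j * α j) * (of fun i j => μ i j * α j)) l m' = 0 :=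
    fun l m' hm' => μ.mul_self_apply_eq_zero_of_weight_eq_zero
      (hα _ ((evenEmbedding n).injective.ne hm') (evenEmbedding_ne_of_odd m' hj)) _
  rw [← μ.mul_self_apply_self_of_pair (evenEmbedding_ne_of_odd m hj) (htri _ _ (by omega))
    (hsymm _ _) hαm hαj hα]
  exact ofReal_apply_le_specRad_of_forall_ne _ m hcol

theorem exists_weights_specRad_subOO_mul_self_eq {n : ℕ} [NeZero n]
    {μ : Matrix (Fin (2 * n)) (Fin (2 * n)) ℝ} (hsymm : ∀ i j, μ i j = μ j i)
    (htri : ∀ i j : Fin (2 * n),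
      ¬((i : ℕ) + 1 = (j : ℕ) ∨ (j : ℕ) + 1 = (i : ℕ)) → μ i j = 0)
    (hμ : ∀ i j, 0 ≤ μ i j) {B : ℝ} (hμB : ∀ i j, μ i j ≤ B) (m : Fin n) {j : Fin (2 * n)}
    (hj : (j : ℕ) % 2 = 1) (hmj : μ (evenEmbedding n m) j = B) :
    ∃ α : Fin (2 * n) → ℝ, (∀ r, 0 ≤ α r) ∧ ∑ r, α r = 1 ∧
      specRad n (subOO n ((of fun i j => μ i j * α j) * (of fun i j => μ i j * α j)))
        = ENNReal.ofReal (B ^ 2 / 4) := by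
  set α : Fin (2 * n) → ℝ := fun k => if k = evenEmbedding n m ∨ k = j then 1 / 2 else 0
  have hα : ∀ r, 0 ≤ α r := fun r => by positivity
  have hα1 : ∑ r, α r = 1 := by
    rw [Fintype.sum_eq_add _ j (evenEmbedding_ne_of_odd m hj) fun k hk => if_neg (by tauto)]
    simp only [true_or, or_true, if_true]
    norm_num
  refine ⟨α, hα, hα1, le_antisymm (specRad_subOO_mul_self_le htri hμ hμB hα hα1) ?_⟩
  rw [← hmj]
  exact ofReal_le_specRad_subOO_mul_self hsymm htri m hj (if_pos (Or.inl rfl))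
    (if_pos (Or.inr rfl)) fun k hkm hkj => if_neg (by tauto)

/-- For `μ` symmetric tridiagonal with zero diagonal and nonnegative entries,
`α ≥ 0` with `Σ α_r = 1`, and `M = (μ_{rs} α_s)`, the spectral radius of `[M²]^(oo)`
is at most `(1/4) max_r μ_{r,r+1}²`, and the supremum over all such `α` equals this
bound (it is attained). -/
theorem spectral_radius_bound_and_sup (n : ℕ) (hn : 1 ≤ n)
    (μ : Matrix (Fin (2 * n)) (Fin (2 * n)) ℝ)
    (hsymm : ∀ i j, μ i j = μ j i)
    (htri : ∀ i j : Fin (2 * n),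
      ¬((i : ℕ) + 1 = (j : ℕ) ∨ (j : ℕ) + 1 = (i : ℕ)) → μ i j = 0)
    (hnonneg : ∀ i j, 0 ≤ μ i j)
    (B : ℝ)
    (hB : B = (Finset.univ : Finset (Fin (2 * n - 1))).sup'
      ⟨⟨0, by omega⟩, Finset.mem_univ _⟩
      (fun r => μ ⟨r.val, by have := r.isLt; omega⟩ ⟨r.val + 1, by have := r.isLt; omega⟩)) :
    (∀ α : Fin (2 * n) → ℝ, (∀ r, 0 ≤ α r) → (∑ r, α r = 1) →
      specRad n (subOO n ((Matrix.of fun i j => μ i j * α j) *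
        (Matrix.of fun i j => μ i j * α j))) ≤ ENNReal.ofReal (B ^ 2 / 4)) ∧
    (∃ α : Fin (2 * n) → ℝ, (∀ r, 0 ≤ α r) ∧ (∑ r, α r = 1) ∧
      specRad n (subOO n ((Matrix.of fun i j => μ i j * α j) *
        (Matrix.of fun i j => μ i j * α j))) = ENNReal.ofReal (B ^ 2 / 4)) := by
  have : NeZero n := ⟨by omega⟩
  set edge : Fin (2 * n - 1) → ℝ := fun r => μ ⟨r, by omega⟩ ⟨r + 1, by omega⟩
  have hedge : ∀ i j : Fin (2 * n), (i : ℕ) + 1 = j → μ i j ≤ B := by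
    intro i j hij
    rw [show j = ⟨i + 1, by omega⟩ from Fin.ext hij.symm, hB]
    exact Finset.le_sup' edge (Finset.mem_univ ⟨i, by omega⟩)
  have hμB := apply_le_of_tridiagonal hsymm htri
    ((hnonneg _ _).trans (hedge ⟨0, by omega⟩ ⟨1, by omega⟩ rfl)) hedge
  refine ⟨fun α hα hα1 => specRad_subOO_mul_self_le htri hnonneg hμB hα hα1, ?_⟩
  obtain ⟨r, -, hr⟩ := Finset.exists_mem_eq_sup' (s := Finset.univ)
    ⟨⟨0, by omega⟩, Finset.mem_univ _⟩ edge
  obtain ⟨m, j, hj, hmj⟩ := exists_evenEmbedding_odd_eq hsymm r (by omega)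
  exact exists_weights_specRad_subOO_mul_self_eq hsymm htri hnonneg hμB m hj
    (hmj.trans (hr.symm.trans hB.symm))
end
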